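/- Let F(u,s,m) = (m(√s+1)(u−1) + 2(2√s + u + 1)) / (m(u−1)³(u−s)). Then for every real s > 0, the second partial derivative ∂²F/∂u² evaluated at u = 0 with m = 8 equals −(2s^{3/2} + 3s² + 4s + 2√s + 3)/(2s³); that is, K⁽⁸⁾_{Δ_k}(s) = −(2s^{3/2} + 3s² + 4s + 2√s + 3)/(2s³). -/
import Mathlib

open Real

/-- The one-variable generating function of the local curvature functions of the
perturbed Laplacian on a Connes–Landi deformation. -/
noncomputable def F (u s m : ℝ) : ℝ :=
  (m * (Real.sqrt s + 1) * (u - 1) + 2 * (2 * Real.sqrt s + u + 1)) /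
    (m * (u - 1) ^ 3 * (u - s))

/-- Numerator of `F` at `m = 8`, with `a = √s`. -/
def Nf (a u : ℝ) : ℝ := 8 * (a + 1) * (u - 1) + 2 * (2 * a + u + 1)

/-- Denominator of `F` at `m = 8`, with `s = a ^ 2`. -/
def Df (a u : ℝ) : ℝ := 8 * (u - 1) ^ 3 * (u - a ^ 2)

/-- Derivative of `Df` in `u`. -/
def Df' (a u : ℝ) : ℝ := 8 * (3 * (u - 1) ^ 2 * (u - a ^ 2) + (u - 1) ^ 3)

/-- Second derivative of `Df` in `u`. -/
def Df'' (a u : ℝ) : ℝ := 8 * (6 * (u - 1) * (u - a ^ 2) + 6 * (u - 1) ^ 2)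

/-- First derivative of `Nf/Df` (quotient rule). -/
noncomputable def Gf (a u : ℝ) : ℝ :=
  ((8 * (a + 1) + 2) * Df a u - Nf a u * Df' a u) / (Df a u) ^ 2

lemma hasDerivAt_Nf (a u : ℝ) : HasDerivAt (Nf a) (8 * (a + 1) + 2) u := by
  have h1 : HasDerivAt (fun u : ℝ => u - 1) 1 u := (hasDerivAt_id u).sub_const 1
  have h2 : HasDerivAt (fun u : ℝ => 2 * a + u + 1) 1 u := by
    simpa using ((hasDerivAt_id u).const_add (2 * a)).add_const 1
  have h := (h1.const_mul (8 * (a + 1))).add (h2.const_mul 2)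
  have heq : (8 : ℝ) * (a + 1) + 2 = 8 * (a + 1) * 1 + 2 * 1 := by ring
  rw [heq]
  exact h

lemma hasDerivAt_Df (a u : ℝ) : HasDerivAt (Df a) (Df' a u) u := by
  have h1 : HasDerivAt (fun u : ℝ => u - 1) 1 u := (hasDerivAt_id u).sub_const 1
  have h2 := h1.pow 3
  have h3 : HasDerivAt (fun u : ℝ => u - a ^ 2) 1 u := (hasDerivAt_id u).sub_const _
  have h := (h2.const_mul 8).mul h3
  have heq : Df' a u =
      8 * ((3 : ℕ) * (u - 1) ^ (3 - 1) * 1) * (u - a ^ 2) + 8 * (u - 1) ^ 3 * 1 := by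
    simp [Df']; ring
  rw [heq]
  exact h

lemma hasDerivAt_Df' (a u : ℝ) : HasDerivAt (Df' a) (Df'' a u) u := by
  have h1 : HasDerivAt (fun u : ℝ => u - 1) 1 u := (hasDerivAt_id u).sub_const 1
  have h2 := h1.pow 2
  have h3 := h1.pow 3
  have h4 : HasDerivAt (fun u : ℝ => u - a ^ 2) 1 u := (hasDerivAt_id u).sub_const _
  have h := (((h2.const_mul 3).mul h4).add h3).const_mul 8
  have heq : Df'' a u =
      8 * (3 * ((2 : ℕ) * (u - 1) ^ (2 - 1) * 1) * (u - a ^ 2) + 3 * (u - 1) ^ 2 * 1 +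
        (3 : ℕ) * (u - 1) ^ (3 - 1) * 1) := by
    simp [Df'']; ring
  rw [heq]
  exact h

lemma hasDerivAt_quot (a u : ℝ) (hu : Df a u ≠ 0) :
    HasDerivAt (fun u => Nf a u / Df a u) (Gf a u) u :=
  (hasDerivAt_Nf a u).div (hasDerivAt_Df a u) hu

lemma aux (a : ℝ) (ha : 0 < a) :
    iteratedDeriv 2 (fun u : ℝ => Nf a u / Df a u) 0 =
      -(2 * a ^ 3 + 3 * (a ^ 2) ^ 2 + 4 * a ^ 2 + 2 * a + 3) / (2 * (a ^ 2) ^ 3) := by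
  have hopen : IsOpen {u : ℝ | Df a u ≠ 0} := by
    have hc : Continuous (Df a) := by unfold Df; continuity
    exact hc.isOpen_preimage _ isOpen_compl_singleton
  have hD0 : Df a 0 = 8 * a ^ 2 := by simp [Df]; ring
  have hD0ne : Df a 0 ≠ 0 := by rw [hD0]; positivity
  have h0mem : (0 : ℝ) ∈ {u : ℝ | Df a u ≠ 0} := hD0ne
  have hev : deriv (fun u : ℝ => Nf a u / Df a u) =ᶠ[nhds 0] Gf a :=
    Filter.eventuallyEq_of_mem (hopen.mem_nhds h0mem)
      (fun u hu => (hasDerivAt_quot a u hu).deriv)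
  rw [iteratedDeriv_succ, iteratedDeriv_one, hev.deriv_eq]
  -- derivative of Gf at 0
  have hP : HasDerivAt (fun u => (8 * (a + 1) + 2) * Df a u - Nf a u * Df' a u)
      ((8 * (a + 1) + 2) * Df' a 0 -
        ((8 * (a + 1) + 2) * Df' a 0 + Nf a 0 * Df'' a 0)) 0 :=
    ((hasDerivAt_Df a 0).const_mul _).sub
      ((hasDerivAt_Nf a 0).mul (hasDerivAt_Df' a 0))
  have hQ : HasDerivAt (fun u => (Df a u) ^ 2) (2 * Df a 0 ^ 1 * Df' a 0) 0 :=
    (hasDerivAt_Df a 0).pow 2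
  have hQ0 : (Df a 0) ^ 2 ≠ 0 := pow_ne_zero _ hD0ne
  have hG : HasDerivAt (Gf a)
      ((((8 * (a + 1) + 2) * Df' a 0 -
          ((8 * (a + 1) + 2) * Df' a 0 + Nf a 0 * Df'' a 0)) * (Df a 0) ^ 2 -
        ((8 * (a + 1) + 2) * Df a 0 - Nf a 0 * Df' a 0) * (2 * Df a 0 ^ 1 * Df' a 0)) /
        ((Df a 0) ^ 2) ^ 2) 0 := hP.div hQ hQ0
  rw [hG.deriv]
  have hane : a ≠ 0 := ha.ne'
  simp only [Nf, Df, Df', Df'']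
  norm_num
  field_simp
  ring

/-- In dimension eight, the one-variable local curvature function of the perturbed
Laplacian is `K⁽⁸⁾_{Δ_k}(s) = ∂²F/∂u² (0,s,8)
  = −(2s^{3/2} + 3s² + 4s + 2√s + 3)/(2s³)`. -/
theorem stmt4 (s : ℝ) (hs : 0 < s) :
    iteratedDeriv 2 (fun u : ℝ => F u s 8) 0 =
      -(2 * Real.sqrt s ^ 3 + 3 * s ^ 2 + 4 * s + 2 * Real.sqrt s + 3) / (2 * s ^ 3) := by
  have ha2 : Real.sqrt s ^ 2 = s := Real.sq_sqrt hs.le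
  have hfun : (fun u : ℝ => F u s 8) = fun u => Nf (Real.sqrt s) u / Df (Real.sqrt s) u := by
    funext u; simp only [F, Nf, Df, ha2]
  rw [hfun, aux _ (Real.sqrt_pos.mpr hs), ha2]
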